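/- arXiv:1709.07785 — 2 statements merged into one kernel-verified Lean document; each statement's English description precedes it below -/
import Mathlib

section
/- Let c be a permutation of Fin n which is a cycle (Equiv.Perm.IsCycle c), let i be in the support of c, and let ν be a permutation of Fin n fixing every element of the support of c. Then for every family 𝒢 : Set (Set (Fin n)), the number of permutations π with Equiv.Perm.cycleOf π i = c and 𝒢[π] = 𝒢 equals the number of permutations π with Equiv.Perm.cycleOf π i = c and 𝒢[π] = (fun B => ν '' B) '' 𝒢. (Hence, among permutations whose disjoint cycle decomposition involves the fixed cycle c containing i, groupings that agree on the group of i and differ only by relabeling the remaining players are equinumerous.) -/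
/-!
Conjugation `π ↦ ν π ν⁻¹` is a bijection of permutations. It carries the cycle of `π`
through `i` to the cycle of `ν π ν⁻¹` through `ν i = i`, namely `ν (π.cycleOf i) ν⁻¹`,
and it carries the orbits of `π` to their images under `ν`. A permutation fixing the
support of `c` pointwise commutes with `c`, so `π.cycleOf i = c` is preserved, while
`grouping π = 𝒢` becomes `grouping (ν π ν⁻¹) = ν '' 𝒢`.
-/

/-- The grouping (orbit partition) specified by a permutation. -/
def grouping {n : ℕ} (π : Equiv.Perm (Fin n)) : Set (Set (Fin n)) :=
  Set.range (fun i => {x | Equiv.Perm.SameCycle π i x})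

namespace Equiv.Perm

variable {α : Type*} [Fintype α] [DecidableEq α]

theorem cycleOf_conj (σ f : Perm α) (x : α) :
    (σ * f * σ⁻¹).cycleOf (σ x) = σ * f.cycleOf x * σ⁻¹ := by
  ext y
  simp only [cycleOf_apply, mul_apply, sameCycle_conj]
  split_ifs <;> simp_all

theorem commute_of_forall_mem_support_apply_eq_self {ν c : Perm α}
    (hν : ∀ x ∈ c.support, ν x = x) : Commute ν c := by
  ext x
  by_cases hx : x ∈ c.support
  · simp [hν x hx, hν (c x) (apply_mem_support.mpr hx)]
  · have hνx : ν x ∉ c.support := fun h => hx (ν.injective (hν _ h) ▸ h)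
    rw [notMem_support] at hx hνx
    simp [hx, hνx]

end Equiv.Perm

open Equiv Equiv.Perm

theorem grouping_conj {n : ℕ} (σ π : Perm (Fin n)) :
    grouping (σ * π * σ⁻¹) = (fun B => ⇑σ '' B) '' grouping π := by
  have horbit : ∀ a, σ '' {x | SameCycle π a x} = {x | SameCycle (σ * π * σ⁻¹) (σ a) x} := by
    intro a
    ext y
    simp [sameCycle_conj]
  simp only [grouping, ← Set.range_comp, Function.comp_def, horbit]
  exact (σ.surjective.range_comp fun j => {x | SameCycle (σ * π * σ⁻¹) j x}).symm

theorem card_grouping_fixed_cycle_relabel_general {n : ℕ} (c : Equiv.Perm (Fin n))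
    (i : Fin n) (hi : i ∈ c.support)
    (ν : Equiv.Perm (Fin n)) (hν : ∀ x ∈ c.support, ν x = x)
    (𝒢 : Set (Set (Fin n))) :
    Nat.card {π : Equiv.Perm (Fin n) // Equiv.Perm.cycleOf π i = c ∧ grouping π = 𝒢} =
      Nat.card {π : Equiv.Perm (Fin n) //
        Equiv.Perm.cycleOf π i = c ∧ grouping π = (fun B => ⇑ν '' B) '' 𝒢} := by
  have hνc : ν * c * ν⁻¹ = c := (commute_of_forall_mem_support_apply_eq_self hν).mul_inv_cancel
  have hνi : ν i = i := hν i hi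
  refine Nat.card_congr ((MulAut.conj ν).toEquiv.subtypeEquiv fun π => ?_)
  have hcycle : (ν * π * ν⁻¹).cycleOf i = ν * π.cycleOf i * ν⁻¹ := by
    rw [← cycleOf_conj, hνi]
  rw [MulEquiv.toEquiv_eq_coe, MulEquiv.coe_toEquiv, MulAut.conj_apply, hcycle, grouping_conj]
  nth_rw 2 [← hνc]
  refine and_congr ?_ (Set.image_injective.mpr (Set.image_injective.mpr ν.injective)).eq_iff.symm
  rw [mul_left_inj, mul_right_inj]

theorem card_grouping_fixed_cycle_relabel {n : ℕ} (c : Equiv.Perm (Fin n))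
    (hc : Equiv.Perm.IsCycle c) (i : Fin n) (hi : i ∈ c.support)
    (ν : Equiv.Perm (Fin n)) (hν : ∀ x ∈ c.support, ν x = x)
    (𝒢 : Set (Set (Fin n))) :
    Nat.card {π : Equiv.Perm (Fin n) // Equiv.Perm.cycleOf π i = c ∧ grouping π = 𝒢} =
      Nat.card {π : Equiv.Perm (Fin n) //
        Equiv.Perm.cycleOf π i = c ∧ grouping π = (fun B => ⇑ν '' B) '' 𝒢} :=
  card_grouping_fixed_cycle_relabel_general c i hi ν hν 𝒢
end

section
/- Let G be a finite nonempty group and let p : PMF (G × G) be an arbitrary joint distribution of a pair (v, w) of elements of G. Let q : PMF (G × G × G) be the joint distribution of (r * v, v, w) where r is uniform on G and independent of (v, w); formally q := p.bind (fun vw => PMF.map (fun r => (r * vw.1, vw.1, vw.2)) (PMF.uniformOfFintype G)). Then for all u, v, w ∈ G, q (u, v, w) = (Fintype.card G : ℝ≥0∞)⁻¹ * p (v, w). (Hence in the permutation division protocol, the only opened data rv is uniformly distributed and independent of the inputs v and w.) -/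
open scoped ENNReal

/-!
For each fixed input `(v, w)`, right multiplication by `v` is a bijection of `G`, so `r * v` is
again uniform; hence `q` is the law of an independent pair `(u, (v, w))` with `u` uniform, and its
mass function is the product of the marginals.
-/

namespace PMF

variable {α β : Type*}

theorem map_apply_of_injective {f : α → β} (hf : f.Injective) (p : PMF α) (a : α) :
    p.map f (f a) = p a := by
  rw [map_apply, tsum_eq_single a]
  · exact if_pos rfl
  · intro a' ha'
    exact if_neg fun h => ha' (hf h).symm

theorem bind_map_prodMk_apply (p : PMF β) (μ : PMF α) (a : α) (b : β) :
    p.bind (fun y => μ.map fun x => (x, y)) (a, b) = μ a * p b := by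
  rw [bind_apply, tsum_eq_single b, map_apply_of_injective (Prod.mk_left_injective b), mul_comm]
  intro b' hb'
  suffices μ.map (fun x => (x, b')) (a, b) = 0 by rw [this, mul_zero]
  rw [apply_eq_zero_iff, support_map]
  rintro ⟨x, -, hx⟩
  exact hb' (Prod.ext_iff.mp hx).2

theorem map_mul_right_uniformOfFintype {G : Type*} [Group G] [Fintype G] [Nonempty G] (g : G) :
    (uniformOfFintype G).map (· * g) = uniformOfFintype G := by
  ext x
  rw [← inv_mul_cancel_right x g, map_apply_of_injective (mul_left_injective g),
    uniformOfFintype_apply, uniformOfFintype_apply]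

end PMF

theorem permutation_division_security {G : Type*} [Group G] [Fintype G] [Nonempty G]
    (p : PMF (G × G))
    (q : PMF (G × G × G))
    (hq : q = p.bind (fun vw =>
      PMF.map (fun r => (r * vw.1, vw.1, vw.2)) (PMF.uniformOfFintype G)))
    (u v w : G) :
    q (u, v, w) = (Fintype.card G : ℝ≥0∞)⁻¹ * p (v, w) := by
  have h_indep : (fun vw : G × G =>
      PMF.map (fun r => (r * vw.1, vw.1, vw.2)) (PMF.uniformOfFintype G)) =
      fun vw => (PMF.uniformOfFintype G).map fun x => (x, vw) := by
    funext vw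
    conv_rhs => rw [← PMF.map_mul_right_uniformOfFintype vw.1, PMF.map_comp]
    rfl
  rw [hq, h_indep, PMF.bind_map_prodMk_apply, PMF.uniformOfFintype_apply]
end
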